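/- Observation 1 (permutation of rules): Let R be a rule set and ρ ∈ R. Whenever, in a derivation in G3(R), the conclusion of an application of s(ρ) is a premise of an application of (∧R) or of (∃R), the two consecutive rule applications can be interchanged: there is a derivation of the same end-sequent from the same open premises in which the application of (∧R) (respectively (∃R)) occurs immediately above the application of s(ρ). -/

import Mathlib

/- ## Syntax: terms, atoms, first-order formulas -/

/-- Terms: constants `C` and variables `V` (both indexed by ℕ, disjoint by construction). -/
inductive Tm where
  | const : ℕ → Tm
  | var : ℕ → Tm
deriving DecidableEq

/-- An atom `p(t₁,…,tₙ)`.  Predicate `0` is reserved for the special unary predicate `⊤`;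
    predicates of the language `𝓛` are the predicates `p ≠ 0`. -/
structure Atom where
  pred : ℕ
  args : List Tm
deriving DecidableEq

/-- First-order formulas, generated from atoms by `¬`, `∧` and `∃x`. -/
inductive Fml where
  | atom : ℕ → List Tm → Fml
  | not : Fml → Fml
  | and : Fml → Fml → Fml
  | ex : ℕ → Fml → Fml
deriving DecidableEq

def Atom.toFml (a : Atom) : Fml := Fml.atom a.pred a.args

/-- Extension of a substitution on variables to all terms (constants are fixed). -/
def Tm.app (μ : ℕ → Tm) : Tm → Tm
  | Tm.const c => Tm.const c
  | Tm.var x => μ x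

def Atom.map (f : Tm → Tm) (a : Atom) : Atom := ⟨a.pred, a.args.map f⟩

def Atom.subst (μ : ℕ → Tm) (a : Atom) : Atom := a.map (Tm.app μ)

/-- `Tm.subst t x` substitutes the term `t` for the variable `x`. -/
def Tm.subst (t : Tm) (x : ℕ) : Tm → Tm
  | Tm.const c => Tm.const c
  | Tm.var y => if y = x then t else Tm.var y

/-- `Fml.subst t x φ` is `φ(t/x)`: substitute `t` for every free occurrence of `x` in `φ`. -/
def Fml.subst (t : Tm) (x : ℕ) : Fml → Fml
  | Fml.atom p ts => Fml.atom p (ts.map (Tm.subst t x))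
  | Fml.not φ => Fml.not (Fml.subst t x φ)
  | Fml.and φ ψ => Fml.and (Fml.subst t x φ) (Fml.subst t x ψ)
  | Fml.ex y φ => if y = x then Fml.ex y φ else Fml.ex y (Fml.subst t x φ)

/-- Free variables of a formula. -/
def Fml.fv : Fml → Set ℕ
  | Fml.atom _ ts => {x | Tm.var x ∈ ts}
  | Fml.not φ => φ.fv
  | Fml.and φ ψ => φ.fv ∪ ψ.fv
  | Fml.ex y φ => φ.fv \ {y}

/-- Free variables and constants occurring in a formula. -/
def Fml.tms : Fml → Set Tm
  | Fml.atom _ ts => {t | t ∈ ts}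
  | Fml.not φ => φ.tms
  | Fml.and φ ψ => φ.tms ∪ ψ.tms
  | Fml.ex y φ => φ.tms \ {Tm.var y}

/-- A formula of the language `𝓛`, i.e. not mentioning the special predicate `⊤`. -/
def Fml.noTop : Fml → Prop
  | Fml.atom p _ => p ≠ 0
  | Fml.not φ => φ.noTop
  | Fml.and φ ψ => φ.noTop ∧ ψ.noTop
  | Fml.ex _ φ => φ.noTop

def Atom.tms (a : Atom) : Set Tm := {t | t ∈ a.args}

/-- Terms occurring in an instance. -/
def itms (I : Set Atom) : Set Tm := ⋃ a ∈ I, a.tms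

/-- `T(Γ)`: free variables and constants occurring in a set of formulas. -/
def tmsOf (S : Set Fml) : Set Tm := ⋃ φ ∈ S, φ.tms

/-- The atom `⊤(c)`. -/
def topAtom (c : ℕ) : Atom := ⟨0, [Tm.const c]⟩

/-- `I^⊤ = I ∪ {⊤(c) | c ∈ C}`. -/
def mfy (I : Set Atom) : Set Atom := I ∪ Set.range topAtom

/-- An instance is an interpretation iff `I^⊤ = I`. -/
def IsInterp (I : Set Atom) : Prop := mfy I = I

/-- An assignment into a set of terms: maps each variable into `T` (constants are fixed via `Tm.app`). -/
def IsAsg (T : Set Tm) (μ : ℕ → Tm) : Prop := ∀ x : ℕ, μ x ∈ T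

/- ## Semantics -/

/-- Satisfaction `I,μ ⊨ φ`. -/
def Sat (I : Set Atom) : (ℕ → Tm) → Fml → Prop
  | μ, Fml.atom p ts => (⟨p, ts.map (Tm.app μ)⟩ : Atom) ∈ I
  | μ, Fml.not φ => ¬ Sat I μ φ
  | μ, Fml.and φ ψ => Sat I μ φ ∧ Sat I μ ψ
  | μ, Fml.ex x φ => ∃ t ∈ itms I, Sat I (Function.update μ x t) φ

/-- `I ⊨ φ`: satisfaction under every `I`-assignment. -/
def SatF (I : Set Atom) (φ : Fml) : Prop :=
  ∀ μ : ℕ → Tm, IsAsg (itms I) μ → Sat I μ φ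

/-- Satisfaction under some `I`-assignment (used for instances that need not be interpretations). -/
def SatI (I : Set Atom) (φ : Fml) : Prop :=
  ∃ μ : ℕ → Tm, IsAsg (itms I) μ ∧ Sat I μ φ

/- ## Existential rules -/

/-- An existential rule `ρ = ∀x⃗y⃗ (β(x⃗,y⃗) → ∃z⃗ α(y⃗,z⃗))`: `body` is `β`, `head` is `α`
    (conjunctions of atoms identified with finite sets of atoms), and `evars` is `z⃗`. -/
structure ERule where
  body : Finset Atom
  head : Finset Atom
  evars : Finset ℕ
  body_nonempty : body.Nonempty
  head_nonempty : head.Nonempty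
  body_noTop : ∀ a ∈ body, a.pred ≠ 0
  head_noTop : ∀ a ∈ head, a.pred ≠ 0
  body_evars : ∀ a ∈ body, ∀ z ∈ evars, Tm.var z ∉ a.args
  head_frontier : ∀ a ∈ head, ∀ x : ℕ, Tm.var x ∈ a.args → x ∉ evars →
    ∃ b ∈ body, Tm.var x ∈ b.args

/-- `I ⊨ ρ` for an existential rule `ρ` (satisfaction of its universal closure). -/
def SatRule (I : Set Atom) (ρ : ERule) : Prop :=
  ∀ μ : ℕ → Tm, IsAsg (itms I) μ → (∀ a ∈ ρ.body, Atom.subst μ a ∈ I) →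
    ∃ ν : ℕ → Tm, IsAsg (itms I) ν ∧ (∀ x : ℕ, x ∉ ρ.evars → ν x = μ x) ∧
      ∀ a ∈ ρ.head, Atom.subst ν a ∈ I

/-- A database: a finite set of ground atoms (over the predicates of `𝓛`). -/
def IsDatabase (D : Finset Atom) : Prop :=
  ∀ a ∈ D, a.pred ≠ 0 ∧ ∀ t ∈ a.args, ∃ c : ℕ, t = Tm.const c

/-- `I ⊨ D ∪ R`. -/
def Models (I : Set Atom) (D : Finset Atom) (R : Set ERule) : Prop :=
  (∀ a ∈ D, SatF I a.toFml) ∧ ∀ ρ ∈ R, SatRule I ρ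

/-- Conjunctions of atoms (over predicates of `𝓛`). -/
inductive ConjAtoms : Fml → Prop
  | atom (p : ℕ) (ts : List Tm) : p ≠ 0 → ConjAtoms (Fml.atom p ts)
  | and {φ ψ : Fml} : ConjAtoms φ → ConjAtoms ψ → ConjAtoms (Fml.and φ ψ)

/-- A Boolean conjunctive query `∃x⃗ q(x⃗)`. -/
inductive IsBCQ : Fml → Prop
  | base {φ : Fml} : ConjAtoms φ → IsBCQ φ
  | ex {φ : Fml} (x : ℕ) : IsBCQ φ → IsBCQ (Fml.ex x φ)

/-- `(D,R) ⊨ q`. -/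
def KBEntails (D : Finset Atom) (R : Set ERule) (q : Fml) : Prop :=
  ∀ I : Set Atom, IsInterp I → Models I D R → SatF I q

/- ## Sequent calculus G3(R) -/

/-- The instantiated body `β(t⃗,t⃗')` of a rule, as a finite set of formulas. -/
def bodyImg (ρ : ERule) (σ : ℕ → Tm) : Finset Fml :=
  ρ.body.image (fun a => (Atom.subst σ a).toFml)

/-- The instantiated head `α(t⃗',z⃗)` of a rule, as a finite set of formulas. -/
def headImg (ρ : ERule) (ν : ℕ → Tm) : Finset Fml :=
  ρ.head.image (fun a => (Atom.subst ν a).toFml)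

/-- A correct application of the sequent rule `s(ρ)` with premise `Γ' ⊢ Δ` and conclusion `Γ ⊢ Δ`:
    `σ` instantiates `x⃗,y⃗`, the variables `z⃗` are mapped by `ν` to fresh variables
    (not occurring in the conclusion), `Γ` contains the instantiated body, and `Γ'` additionally
    contains the instantiated head. -/
def ERApp (ρ : ERule) (σ ν : ℕ → Tm) (Γ' Γ Δ : Finset Fml) : Prop :=
  (∀ x : ℕ, x ∉ ρ.evars → ν x = σ x) ∧
  (∀ z ∈ ρ.evars, ∃ v : ℕ, ν z = Tm.var v ∧ (∀ χ ∈ Γ, v ∉ χ.fv) ∧ (∀ χ ∈ Δ, v ∉ χ.fv)) ∧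
  (∀ z ∈ ρ.evars, ∀ z' ∈ ρ.evars, ν z = ν z' → z = z') ∧
  bodyImg ρ σ ⊆ Γ ∧
  Γ' = Γ ∪ headImg ρ ν

def ERStepR (ρ : ERule) (Γ' Γ Δ : Finset Fml) : Prop :=
  ∃ σ ν : ℕ → Tm, ERApp ρ σ ν Γ' Γ Δ

def ERStep (R : Set ERule) (Γ' Γ Δ : Finset Fml) : Prop :=
  ∃ ρ ∈ R, ERStepR ρ Γ' Γ Δ

/-- Provability in the sequent calculus `G3(R)` (sequents are pairs of finite sets of formulas;
    an inhabitant corresponds to a proof, i.e. a finite derivation tree whose leaves are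
    instances of the initial rule `(id)`). -/
inductive G3P (R : Set ERule) : Finset Fml → Finset Fml → Prop
  | ax {Γ Δ : Finset Fml} (p : ℕ) (ts : List Tm) :
      Fml.atom p ts ∈ Γ → Fml.atom p ts ∈ Δ → G3P R Γ Δ
  | negL {Γ Δ : Finset Fml} (φ : Fml) :
      G3P R Γ (insert φ Δ) → G3P R (insert (Fml.not φ) Γ) Δ
  | negR {Γ Δ : Finset Fml} (φ : Fml) :
      G3P R (insert φ Γ) Δ → G3P R Γ (insert (Fml.not φ) Δ)
  | andL {Γ Δ : Finset Fml} (φ ψ : Fml) :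
      G3P R (insert φ (insert ψ Γ)) Δ → G3P R (insert (Fml.and φ ψ) Γ) Δ
  | andR {Γ Δ : Finset Fml} (φ ψ : Fml) :
      G3P R Γ (insert φ Δ) → G3P R Γ (insert ψ Δ) → G3P R Γ (insert (Fml.and φ ψ) Δ)
  | exL {Γ Δ : Finset Fml} (x y : ℕ) (φ : Fml) :
      (∀ χ ∈ Γ, y ∉ χ.fv) → (∀ χ ∈ Δ, y ∉ χ.fv) → y ∉ (Fml.ex x φ).fv →
      G3P R (insert (Fml.subst (Tm.var y) x φ) Γ) Δ → G3P R (insert (Fml.ex x φ) Γ) Δ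
  | exR {Γ Δ : Finset Fml} (x : ℕ) (φ : Fml) (t : Tm) :
      G3P R Γ (insert (Fml.ex x φ) (insert (Fml.subst t x φ) Δ)) →
      G3P R Γ (insert (Fml.ex x φ) Δ)
  | er {Γ' Γ Δ : Finset Fml} :
      ERStep R Γ' Γ Δ → G3P R Γ' Δ → G3P R Γ Δ

/-- `R`-validity of the formula interpretation `f(Γ ⊢ Δ) = ⋀Γ → ⋁Δ` of a sequent:
    it is satisfied by every interpretation that models `R` (under every assignment). -/
def SeqValid (R : Set ERule) (Γ Δ : Finset Fml) : Prop :=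
  ∀ I : Set Atom, IsInterp I → (∀ ρ ∈ R, SatRule I ρ) →
    ∀ μ : ℕ → Tm, IsAsg (itms I) μ → (∀ φ ∈ Γ, Sat I μ φ) → ∃ ψ ∈ Δ, Sat I μ ψ

/- ## Triggers and the chase -/

/-- `τ = (ρ,μ)` is a trigger in `I`. -/
def IsTrigger (I : Set Atom) (ρ : ERule) (μ : ℕ → Tm) : Prop :=
  IsAsg (itms I) μ ∧ ∀ a ∈ ρ.body, Atom.subst μ a ∈ I

/-- `ν` extends `μ` by mapping the existential variables `z⃗` injectively to fresh variables
    not occurring in `I`. -/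
def FreshExt (I : Set Atom) (ρ : ERule) (μ ν : ℕ → Tm) : Prop :=
  (∀ x : ℕ, x ∉ ρ.evars → ν x = μ x) ∧
  (∀ z ∈ ρ.evars, ∃ v : ℕ, ν z = Tm.var v ∧ Tm.var v ∉ itms I) ∧
  (∀ z ∈ ρ.evars, ∀ z' ∈ ρ.evars, ν z = ν z' → z = z')

/-- `I' = τ(I) = I ∪ α(μ(y⃗),z⃗)` is an application of the trigger `τ = (ρ,μ)`
    (with fresh variables chosen via `ν`). -/
def TriggerApp (I : Set Atom) (ρ : ERule) (μ ν : ℕ → Tm) (I' : Set Atom) : Prop :=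
  FreshExt I ρ μ ν ∧ I' = I ∪ (Atom.subst ν) '' (↑ρ.head : Set Atom)

/-- One step of a chase derivation using a rule from `R`. -/
def ChaseStep (R : Set ERule) (I I' : Set Atom) : Prop :=
  ∃ ρ ∈ R, ∃ μ ν : ℕ → Tm, IsTrigger I ρ μ ∧ TriggerApp I ρ μ ν I'

/-- The one-step chase `Ch₁(I,R) = ⋃_{τ trigger in I} τ(I)`: every trigger of `I` is applied,
    with fresh variables chosen so that distinct applications introduce distinct fresh
    variables (applications sharing a fresh variable produce the same head instantiation). -/
def OneStepChase (R : Set ERule) (I J : Set Atom) : Prop :=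
  ∃ T : Set (ERule × (ℕ → Tm) × (ℕ → Tm)),
    (∀ p ∈ T, p.1 ∈ R ∧ IsTrigger I p.1 p.2.1 ∧ FreshExt I p.1 p.2.1 p.2.2) ∧
    (∀ ρ ∈ R, ∀ μ : ℕ → Tm, IsTrigger I ρ μ → ∃ ν : ℕ → Tm, (ρ, μ, ν) ∈ T) ∧
    (∀ p ∈ T, ∀ p' ∈ T,
      (∃ z ∈ p.1.evars, ∃ z' ∈ p'.1.evars, p.2.2 z = p'.2.2 z') →
      (Atom.subst p.2.2) '' (↑p.1.head : Set Atom) =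
        (Atom.subst p'.2.2) '' (↑p'.1.head : Set Atom)) ∧
    J = I ∪ ⋃ p ∈ T, (Atom.subst p.2.2) '' (↑p.1.head : Set Atom)

/-- `K n = Ch_n(D,R)`: the breadth-first chase sequence starting from the database `D`;
    `Ch_∞(D,R) = mfy (⋃ n, K n)`. -/
def ChaseSeq (R : Set ERule) (D : Finset Atom) (K : ℕ → Set Atom) : Prop :=
  K 0 = (↑D : Set Atom) ∧ ∀ n : ℕ, OneStepChase R (K n) (K (n + 1))

/- ## Homomorphisms -/

/-- A homomorphism from instance `I` to instance `J`. -/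
def IsHom (I J : Set Atom) (h : Tm → Tm) : Prop :=
  (∀ c : ℕ, h (Tm.const c) = Tm.const c) ∧ ∀ a ∈ I, Atom.map h a ∈ J

/- ## Proof search -/

/-- A bottom-up application of `(∧R)` (passing to one premise): conclusion `Γ ⊢ Δ`,
    premise `Γ' ⊢ Δ'`. -/
def AndRStep (Γ Δ Γ' Δ' : Finset Fml) : Prop :=
  Γ' = Γ ∧ ∃ φ ψ : Fml, Fml.and φ ψ ∈ Δ ∧ (Δ' = insert φ Δ ∨ Δ' = insert ψ Δ)

/-- A bottom-up application of `(∃R)`: conclusion `Γ ⊢ Δ`, premise `Γ' ⊢ Δ'`. -/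
def ExRStep (Γ Δ Γ' Δ' : Finset Fml) : Prop :=
  Γ' = Γ ∧ ∃ (x : ℕ) (φ : Fml) (t : Tm), Fml.ex x φ ∈ Δ ∧ Δ' = insert (Fml.subst t x φ) Δ

/-- The atoms occurring as elements of a set of formulas. -/
def atomsOf (S : Set Fml) : Set Atom := {a : Atom | a.toFml ∈ S}

/-- A failed fair proof-search branch for the input sequent `D ⊢ ∃x⃗ q(x⃗)`:
    an infinite sequence of sequents, each obtained from the previous by a bottom-up application
    of `(∧R)`, `(∃R)` or `s(ρ)` with `ρ ∈ R`, on which no sequent is an instance of `(id)` and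
    whose limit satisfies the saturation conditions. -/
structure FailedBranch (R : Set ERule) (D : Finset Atom) (q : Fml) where
  Γ : ℕ → Finset Fml
  Δ : ℕ → Finset Fml
  init_left : Γ 0 = D.image Atom.toFml
  init_right : Δ 0 = {q}
  step : ∀ i : ℕ,
    AndRStep (Γ i) (Δ i) (Γ (i + 1)) (Δ (i + 1)) ∨
    ExRStep (Γ i) (Δ i) (Γ (i + 1)) (Δ (i + 1)) ∨
    (Δ (i + 1) = Δ i ∧ ERStep R (Γ (i + 1)) (Γ i) (Δ i))
  noax : ∀ i : ℕ, ∀ (p : ℕ) (ts : List Tm), Fml.atom p ts ∈ Γ i → Fml.atom p ts ∉ Δ i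
  sat_and : ∀ φ ψ : Fml, Fml.and φ ψ ∈ (⋃ i, (↑(Δ i) : Set Fml)) →
    φ ∈ (⋃ i, (↑(Δ i) : Set Fml)) ∨ ψ ∈ (⋃ i, (↑(Δ i) : Set Fml))
  sat_ex : ∀ (x : ℕ) (φ : Fml), Fml.ex x φ ∈ (⋃ i, (↑(Δ i) : Set Fml)) →
    ∀ t ∈ tmsOf (⋃ i, (↑(Γ i) : Set Fml)), Fml.subst t x φ ∈ (⋃ i, (↑(Δ i) : Set Fml))
  sat_er : ∀ ρ ∈ R, ∀ μ : ℕ → Tm, IsAsg (tmsOf (⋃ i, (↑(Γ i) : Set Fml))) μ →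
    (∀ a ∈ ρ.body, (Atom.subst μ a).toFml ∈ (⋃ i, (↑(Γ i) : Set Fml))) →
    ∃ ν : ℕ → Tm, (∀ x : ℕ, x ∉ ρ.evars → ν x = μ x) ∧
      (∀ z ∈ ρ.evars, ν z ∈ tmsOf (⋃ i, (↑(Γ i) : Set Fml))) ∧
      ∀ a ∈ ρ.head, (Atom.subst ν a).toFml ∈ (⋃ i, (↑(Γ i) : Set Fml))

/-!
Weakening the left side of a `G3(R)` derivation by formulas whose free variables avoid its
eigenvariables preserves derivability. To move `s(ρ)` below `(∧R)` we re-apply `s(ρ)` to `Γ` with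
fresh variables avoiding both derivations, the side formula `ψ` and the old fresh variables;
the instantiated head then weakens the right premise directly, and it weakens the left premise
below the original application of `s(ρ)`, whose fresh variables are still fresh. For `(∃R)` the
conclusion of `s(ρ)` only loses a formula on the right, so the same application works.
-/

lemma Tm.var_injective : Function.Injective Tm.var := fun _ _ h => Tm.var.inj h

lemma Fml.fv_finite (φ : Fml) : φ.fv.Finite := by
  induction φ with
  | atom p ts => exact ts.finite_toSet.preimage Tm.var_injective.injOn
  | not φ ih => exact ih
  | and φ ψ ih₁ ih₂ => exact ih₁.union ih₂
  | ex y φ ih => exact ih.sdiff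

def fvs (Γ : Finset Fml) : Set ℕ := ⋃ χ ∈ Γ, χ.fv

lemma mem_fvs {Γ : Finset Fml} {v : ℕ} : v ∈ fvs Γ ↔ ∃ χ ∈ Γ, v ∈ χ.fv := by
  simp [fvs]

lemma fvs_finite (Γ : Finset Fml) : (fvs Γ).Finite :=
  Γ.finite_toSet.biUnion fun χ _ => χ.fv_finite

/-- The variables occurring in atoms of `Γ`. Atoms are never principal on the left, so these
variables persist up every derivation of a sequent `Γ ⊢ Δ`. -/
def atomVars (Γ : Finset Fml) : Set ℕ := {v | ∃ p ts, Fml.atom p ts ∈ Γ ∧ Tm.var v ∈ ts}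

lemma atomVars_mono {Γ Γ' : Finset Fml} (h : Γ ⊆ Γ') : atomVars Γ ⊆ atomVars Γ' :=
  fun _ ⟨p, ts, hmem, hv⟩ => ⟨p, ts, h hmem, hv⟩

lemma atomVars_insert_of_ne_atom {φ : Fml} (hφ : ∀ p ts, φ ≠ Fml.atom p ts) (Γ : Finset Fml) :
    atomVars (insert φ Γ) ⊆ atomVars Γ := by
  rintro v ⟨p, ts, hmem, hv⟩
  rcases Finset.mem_insert.1 hmem with h | h
  · exact absurd h.symm (hφ p ts)
  · exact ⟨p, ts, h, hv⟩

lemma atomVars_subset_fvs (Γ : Finset Fml) : atomVars Γ ⊆ fvs Γ :=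
  fun _ ⟨_, _, hmem, hv⟩ => mem_fvs.2 ⟨_, hmem, hv⟩

def ERule.freshVars (ρ : ERule) (ν : ℕ → Tm) : Set ℕ := {v | ∃ z ∈ ρ.evars, ν z = Tm.var v}

lemma ERule.freshVars_finite (ρ : ERule) (ν : ℕ → Tm) : (ρ.freshVars ν).Finite :=
  ((ρ.evars.finite_toSet.image ν).preimage Tm.var_injective.injOn).subset
    fun _ ⟨z, hz, hv⟩ => ⟨z, hz, hv⟩

/-- The head variables that are not existential are frontier variables, hence body variables. -/
lemma fv_headImg {ρ : ERule} {σ ν : ℕ → Tm} (hν : ∀ x, x ∉ ρ.evars → ν x = σ x)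
    {χ : Fml} (hχ : χ ∈ headImg ρ ν) {v : ℕ} (hv : v ∈ χ.fv) :
    v ∈ atomVars (bodyImg ρ σ) ∨ v ∈ ρ.freshVars ν := by
  obtain ⟨a, ha, rfl⟩ := Finset.mem_image.1 hχ
  obtain ⟨t, ht, htv⟩ := List.mem_map.1 (show Tm.var v ∈ a.args.map (Tm.app ν) from hv)
  cases t with
  | const c => cases htv
  | var w =>
    by_cases hw : w ∈ ρ.evars
    · exact Or.inr ⟨w, hw, htv⟩
    · obtain ⟨b, hb, hwb⟩ := ρ.head_frontier a ha w ht hw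
      refine Or.inl ⟨b.pred, b.args.map (Tm.app σ), Finset.mem_image.2 ⟨b, hb, rfl⟩, ?_⟩
      exact List.mem_map.2 ⟨Tm.var w, hwb, (hν w hw).symm.trans htv⟩

namespace ERApp

variable {ρ : ERule} {σ ν : ℕ → Tm} {Γ' Γ Δ : Finset Fml}

lemma notMem_fvs (h : ERApp ρ σ ν Γ' Γ Δ) {v : ℕ} (hv : v ∈ ρ.freshVars ν) :
    v ∉ fvs Γ := by
  obtain ⟨z, hz, hzv⟩ := hv
  obtain ⟨w, hzw, hΓ, -⟩ := h.2.1 z hz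
  obtain rfl : v = w := Tm.var.inj (hzv.symm.trans hzw)
  simpa only [mem_fvs, not_exists, not_and] using hΓ

lemma mono_right (h : ERApp ρ σ ν Γ' Γ Δ) {Δ₀ : Finset Fml} (hΔ : Δ₀ ⊆ Δ) :
    ERApp ρ σ ν Γ' Γ Δ₀ := by
  obtain ⟨hσ, hfresh, hinj, hbody, hΓ'⟩ := h
  refine ⟨hσ, fun z hz => ?_, hinj, hbody, hΓ'⟩
  obtain ⟨v, hzv, hΓ, hΔ'⟩ := hfresh z hz
  exact ⟨v, hzv, hΓ, fun χ hχ => hΔ' χ (hΔ hχ)⟩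

lemma union_left (h : ERApp ρ σ ν Γ' Γ Δ) {W : Finset Fml}
    (hW : ∀ χ ∈ W, ∀ v ∈ χ.fv, v ∉ ρ.freshVars ν) : ERApp ρ σ ν (Γ' ∪ W) (Γ ∪ W) Δ := by
  obtain ⟨hσ, hfresh, hinj, hbody, rfl⟩ := h
  refine ⟨hσ, fun z hz => ?_, hinj, hbody.trans Finset.subset_union_left,
    Finset.union_right_comm _ _ _⟩
  obtain ⟨v, hzv, hΓ, hΔ⟩ := hfresh z hz
  refine ⟨v, hzv, fun χ hχ hv => ?_, hΔ⟩
  rcases Finset.mem_union.1 hχ with hχ | hχ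
  · exact hΓ χ hχ hv
  · exact hW χ hχ v hv ⟨z, hz, hzv⟩

end ERApp

lemma exists_erApp (ρ : ERule) {σ : ℕ → Tm} {Γ : Finset Fml} (Δ : Finset Fml)
    (hbody : bodyImg ρ σ ⊆ Γ) {S : Set ℕ} (hS : S.Finite) :
    ∃ ν, ERApp ρ σ ν (Γ ∪ headImg ρ ν) Γ Δ ∧ ∀ v ∈ ρ.freshVars ν, v ∉ S := by
  obtain ⟨N, hN⟩ := (hS.union (fvs_finite (Γ ∪ Δ))).bddAbove
  have hfresh : ∀ z, N + 1 + z ∉ S ∪ fvs (Γ ∪ Δ) := fun z hz => by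
    have := hN hz
    omega
  have hfresh' : ∀ z, ∀ χ ∈ Γ ∪ Δ, N + 1 + z ∉ χ.fv := fun z χ hχ hv =>
    hfresh z (Or.inr (mem_fvs.2 ⟨χ, hχ, hv⟩))
  set ν : ℕ → Tm := fun z => if z ∈ ρ.evars then Tm.var (N + 1 + z) else σ z with hν
  refine ⟨ν, ⟨fun x hx => if_neg hx, fun z hz => ⟨N + 1 + z, if_pos hz,
    fun χ hχ => hfresh' z χ (Finset.mem_union_left _ hχ),
    fun χ hχ => hfresh' z χ (Finset.mem_union_right _ hχ)⟩, fun z hz z' hz' hzz' => ?_,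
    hbody, rfl⟩, ?_⟩
  · simp only [hν, if_pos hz, if_pos hz', Tm.var.injEq] at hzz'
    omega
  · rintro v ⟨z, hz, hzv⟩ hvS
    simp only [hν, if_pos hz, Tm.var.injEq] at hzv
    exact hfresh z (Or.inl (hzv ▸ hvS))

/-- `V` collects the eigenvariables and fresh variables of the derivation. -/
theorem G3P.exists_weakening {R : Set ERule} {Γ Δ : Finset Fml} (h : G3P R Γ Δ) :
    ∃ V : Set ℕ, V.Finite ∧ ∀ W : Finset Fml,
      (∀ χ ∈ W, ∀ v ∈ χ.fv, v ∈ V → v ∈ atomVars Γ) → G3P R (Γ ∪ W) Δ := by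
  induction h with
  | ax p ts hΓ hΔ =>
    exact ⟨∅, Set.finite_empty, fun _ _ => .ax p ts (Finset.mem_union_left _ hΓ) hΔ⟩
  | negL φ _ ih =>
    obtain ⟨V, hV, weaken⟩ := ih
    refine ⟨V, hV, fun W hW => ?_⟩
    rw [Finset.insert_union]
    exact .negL φ (weaken W fun χ hχ v hv hvV =>
      atomVars_insert_of_ne_atom (fun _ _ h => Fml.noConfusion h) _ (hW χ hχ v hv hvV))
  | negR φ _ ih =>
    obtain ⟨V, hV, weaken⟩ := ih
    refine ⟨V, hV, fun W hW => .negR φ ?_⟩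
    rw [← Finset.insert_union]
    exact weaken W fun χ hχ v hv hvV =>
      atomVars_mono (Finset.subset_insert _ _) (hW χ hχ v hv hvV)
  | andL φ ψ _ ih =>
    obtain ⟨V, hV, weaken⟩ := ih
    refine ⟨V, hV, fun W hW => ?_⟩
    rw [Finset.insert_union]
    refine .andL φ ψ ?_
    rw [← Finset.insert_union, ← Finset.insert_union]
    exact weaken W fun χ hχ v hv hvV => atomVars_mono
      ((Finset.subset_insert _ _).trans (Finset.subset_insert _ _))
      (atomVars_insert_of_ne_atom (fun _ _ h => Fml.noConfusion h) _ (hW χ hχ v hv hvV))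
  | andR φ ψ _ _ ih₁ ih₂ =>
    obtain ⟨V₁, hV₁, weaken₁⟩ := ih₁
    obtain ⟨V₂, hV₂, weaken₂⟩ := ih₂
    exact ⟨V₁ ∪ V₂, hV₁.union hV₂, fun W hW =>
      .andR φ ψ (weaken₁ W fun χ hχ v hv hvV => hW χ hχ v hv (Or.inl hvV))
        (weaken₂ W fun χ hχ v hv hvV => hW χ hχ v hv (Or.inr hvV))⟩
  | exL x y φ hΓ hΔ hφ _ ih =>
    obtain ⟨V, hV, weaken⟩ := ih
    have hex : ∀ p ts, Fml.ex x φ ≠ Fml.atom p ts := fun _ _ h => Fml.noConfusion h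
    refine ⟨insert y V, hV.insert y, fun W hW => ?_⟩
    have hyW : ∀ χ ∈ W, y ∉ χ.fv := fun χ hχ hy =>
      let ⟨_, _, hmem, hyts⟩ := atomVars_insert_of_ne_atom hex _ (hW χ hχ y hy (.inl rfl))
      hΓ _ hmem hyts
    rw [Finset.insert_union]
    refine .exL x y φ (fun χ hχ => ?_) hΔ hφ ?_
    · rcases Finset.mem_union.1 hχ with hχ | hχ
      · exact hΓ χ hχ
      · exact hyW χ hχ
    · rw [← Finset.insert_union]
      exact weaken W fun χ hχ v hv hvV => atomVars_mono (Finset.subset_insert _ _)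
        (atomVars_insert_of_ne_atom hex _ (hW χ hχ v hv (.inr hvV)))
  | exR x φ t _ ih =>
    obtain ⟨V, hV, weaken⟩ := ih
    exact ⟨V, hV, fun W hW => .exR x φ t (weaken W hW)⟩
  | @er Γ' Γ Δ hstep _ ih =>
    obtain ⟨ρ, hρ, σ, ν, happ⟩ := hstep
    obtain ⟨V, hV, weaken⟩ := ih
    have hΓ : Γ ⊆ Γ' := happ.2.2.2.2 ▸ Finset.subset_union_left
    refine ⟨V ∪ ρ.freshVars ν, hV.union (ρ.freshVars_finite ν), fun W hW => ?_⟩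
    refine .er ⟨ρ, hρ, σ, ν, happ.union_left fun χ hχ v hv hvν => ?_⟩
      (weaken W fun χ hχ v hv hvV => atomVars_mono hΓ (hW χ hχ v hv (.inl hvV)))
    exact happ.notMem_fvs hvν (atomVars_subset_fvs _ (hW χ hχ v hv (.inr hvν)))

theorem ERStepR.permute_andR {R : Set ERule} {ρ : ERule} (hρ : ρ ∈ R)
    {Γ' Γ Δ : Finset Fml} {φ ψ : Fml} (hstep : ERStepR ρ Γ' Γ (insert φ Δ))
    (d₁ : G3P R Γ' (insert φ Δ)) (d₂ : G3P R Γ (insert ψ Δ)) :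
    ∃ Γ'' : Finset Fml, ERStepR ρ Γ'' Γ (insert (Fml.and φ ψ) Δ) ∧
      G3P R Γ'' (insert φ Δ) ∧ G3P R Γ'' (insert ψ Δ) := by
  obtain ⟨σ, ν, happ⟩ := hstep
  obtain rfl : Γ' = Γ ∪ headImg ρ ν := happ.2.2.2.2
  have hbody : bodyImg ρ σ ⊆ Γ := happ.2.2.2.1
  obtain ⟨V₁, hV₁, weaken₁⟩ := d₁.exists_weakening
  obtain ⟨V₂, hV₂, weaken₂⟩ := d₂.exists_weakening
  obtain ⟨ν', happ', hν'⟩ := exists_erApp ρ (insert (Fml.and φ ψ) Δ) hbody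
    ((hV₁.union hV₂).union (ρ.freshVars_finite ν))
  have hhead : ∀ χ ∈ headImg ρ ν', ∀ v ∈ χ.fv, v ∈ atomVars Γ ∨ v ∈ ρ.freshVars ν' :=
    fun χ hχ v hv => (fv_headImg happ'.1 hχ hv).imp_left (atomVars_mono hbody ·)
  refine ⟨Γ ∪ headImg ρ ν', ⟨σ, ν', happ'⟩, ?_, ?_⟩
  · have d₁' := weaken₁ (headImg ρ ν') fun χ hχ v hv hvV =>
      (hhead χ hχ v hv).elim (atomVars_mono Finset.subset_union_left ·)
        fun hvν' => absurd (.inl (.inl hvV)) (hν' v hvν')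
    rw [Finset.union_right_comm] at d₁'
    refine .er ⟨ρ, hρ, σ, ν, ?_⟩ d₁'
    rw [Finset.union_right_comm]
    refine happ.union_left fun χ hχ v hv hvν => ?_
    rcases hhead χ hχ v hv with hvΓ | hvν'
    · exact happ.notMem_fvs hvν (atomVars_subset_fvs _ hvΓ)
    · exact hν' v hvν' (.inr hvν)
  · exact weaken₂ (headImg ρ ν') fun χ hχ v hv hvV =>
      (hhead χ hχ v hv).resolve_right fun hvν' => hν' v hvν' (.inl (.inr hvV))

theorem ERStepR.permute_exR {ρ : ERule} {Γ' Γ Δ : Finset Fml} {x : ℕ} {φ : Fml} {t : Tm}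
    (hstep : ERStepR ρ Γ' Γ (insert (Fml.ex x φ) (insert (Fml.subst t x φ) Δ))) :
    ERStepR ρ Γ' Γ (insert (Fml.ex x φ) Δ) :=
  let ⟨σ, ν, happ⟩ := hstep
  ⟨σ, ν, happ.mono_right (Finset.insert_subset_insert _ (Finset.subset_insert _ _))⟩

theorem permute_above_er_general (R : Set ERule) (ρ : ERule) (hρ : ρ ∈ R) :
    (∀ (Γ' Γ Δ : Finset Fml) (φ ψ : Fml),
      ERStepR ρ Γ' Γ (insert φ Δ) →
      G3P R Γ' (insert φ Δ) → G3P R Γ (insert ψ Δ) →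
      ∃ Γ'' : Finset Fml, ERStepR ρ Γ'' Γ (insert (Fml.and φ ψ) Δ) ∧
        G3P R Γ'' (insert φ Δ) ∧ G3P R Γ'' (insert ψ Δ)) ∧
    (∀ (Γ' Γ Δ : Finset Fml) (x : ℕ) (φ : Fml) (t : Tm),
      ERStepR ρ Γ' Γ (insert (Fml.ex x φ) (insert (Fml.subst t x φ) Δ)) →
      G3P R Γ' (insert (Fml.ex x φ) (insert (Fml.subst t x φ) Δ)) →
      ∃ Γ'' : Finset Fml, ERStepR ρ Γ'' Γ (insert (Fml.ex x φ) Δ) ∧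
        G3P R Γ'' (insert (Fml.ex x φ) (insert (Fml.subst t x φ) Δ))) :=
  ⟨fun _ _ _ _ _ hstep d₁ d₂ => hstep.permute_andR hρ d₁ d₂,
    fun Γ' _ _ _ _ _ hstep d => ⟨Γ', hstep.permute_exR, d⟩⟩

/-- Observation 1: applications of `(∧R)` and of `(∃R)` permute above `s(ρ)`:
    whenever the conclusion of an `s(ρ)` application is a premise of an `(∧R)` (resp. `(∃R)`)
    application, the same end-sequent is derivable with the `s(ρ)` application at the bottom and
    the `(∧R)` (resp. `(∃R)`) application immediately above it. -/
theorem permute_above_er (R : Set ERule) (hR : R.Finite) (ρ : ERule) (hρ : ρ ∈ R) :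
    (∀ (Γ' Γ Δ : Finset Fml) (φ ψ : Fml),
      ERStepR ρ Γ' Γ (insert φ Δ) →
      G3P R Γ' (insert φ Δ) → G3P R Γ (insert ψ Δ) →
      ∃ Γ'' : Finset Fml, ERStepR ρ Γ'' Γ (insert (Fml.and φ ψ) Δ) ∧
        G3P R Γ'' (insert φ Δ) ∧ G3P R Γ'' (insert ψ Δ)) ∧
    (∀ (Γ' Γ Δ : Finset Fml) (x : ℕ) (φ : Fml) (t : Tm),
      ERStepR ρ Γ' Γ (insert (Fml.ex x φ) (insert (Fml.subst t x φ) Δ)) →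
      G3P R Γ' (insert (Fml.ex x φ) (insert (Fml.subst t x φ) Δ)) →
      ∃ Γ'' : Finset Fml, ERStepR ρ Γ'' Γ (insert (Fml.ex x φ) Δ) ∧
        G3P R Γ'' (insert (Fml.ex x φ) (insert (Fml.subst t x φ) Δ))) :=
  permute_above_er_general R ρ hρ
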